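/- Fix real k_s, k_m, k_ℓ with k_m ≥ 0 and set 𝛂 = k_s + k_ℓ − 1/2, 𝛃 = k_ℓ − 1/2. For every integer 1 ≤ i ≤ r, the set D_k(Θ_i) is finite, and it is nonempty if and only if 𝛂 − |𝛃| + 2(i−1)k_m + 1 < 0. -/

import Mathlib

/-! Every `ξ ∈ D_k(Θ_i)` has the shape `ξ_j = α - |β| + 1 + 2 j k_m + 2 m_j` with `m_j ∈ ℕ`, and
`ξ_k - ξ_j ≥ 2 (k - j) k_m`; since `ξ_{i-1} < 0`, each coordinate ranges over a bounded-above
translate of `2ℕ`, so `D_k(Θ_i)` is finite. The last coordinate is smallest when all `m_j = 0`,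
and the arithmetic progression `ξ_j = α - |β| + 1 + 2 j k_m` lies in `D_k(Θ_i)` exactly when its
last term is negative. -/

noncomputable section

/-- The set `D_k(Θ_i)` of discrete spectral parameters, for the root system of
type `BC` with multiplicities encoded through `α`, `β` and `km`. -/
def DkSet (α β km : ℝ) (i : ℕ) : Set (Fin i → ℝ) :=
  {ξ | (∀ h : 0 < i, ∃ n : ℕ, ξ ⟨0, h⟩ + |β| - α - 1 = 2 * (n : ℝ)) ∧
       (∀ h : 0 < i, ξ ⟨i - 1, by omega⟩ < 0) ∧
       (∀ j : ℕ, ∀ h : j + 1 < i,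
         ∃ n : ℕ, ξ ⟨j + 1, h⟩ - ξ ⟨j, by omega⟩ - 2 * km = 2 * (n : ℝ))}

lemma Set.finite_setOf_exists_eq_add_two_mul_natCast_lt (a b : ℝ) :
    {x : ℝ | ∃ m : ℕ, x = a + 2 * m ∧ x < b}.Finite := by
  refine ((Set.finite_Iio ⌈(b - a) / 2⌉₊).image fun m : ℕ => a + 2 * m).subset ?_
  rintro x ⟨m, rfl, hx⟩
  refine ⟨m, ?_, rfl⟩
  rw [Set.mem_Iio, ← Nat.cast_lt (α := ℝ)]
  linarith [Nat.le_ceil ((b - a) / 2)]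

namespace DkSet

variable {α β km : ℝ} {i : ℕ} {ξ : Fin i → ℝ}

lemma exists_coord_eq (hξ : ξ ∈ DkSet α β km i) (j : ℕ) (hj : j < i) :
    ∃ m : ℕ, ξ ⟨j, hj⟩ = α - |β| + 1 + 2 * j * km + 2 * m := by
  induction j with
  | zero =>
    obtain ⟨n, hn⟩ := hξ.1 hj
    exact ⟨n, by push_cast; linarith⟩
  | succ j ih =>
    obtain ⟨m, hm⟩ := ih (by omega)
    obtain ⟨n, hn⟩ := hξ.2.2 j hj
    exact ⟨m + n, by push_cast; linarith⟩

lemma coord_add_le (hξ : ξ ∈ DkSet α β km i) {j k : ℕ} (hjk : j ≤ k) (hk : k < i) :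
    ξ ⟨j, hjk.trans_lt hk⟩ + 2 * ((k : ℝ) - j) * km ≤ ξ ⟨k, hk⟩ := by
  induction k, hjk using Nat.le_induction with
  | base => simp
  | succ k hjk ih =>
    obtain ⟨n, hn⟩ := hξ.2.2 k hk
    have := ih (by omega)
    push_cast
    linarith [(Nat.cast_nonneg n : (0 : ℝ) ≤ n)]

lemma coord_lt (hξ : ξ ∈ DkSet α β km i) (j : ℕ) (hj : j < i) :
    ξ ⟨j, hj⟩ < -(2 * (((i - 1 : ℕ) : ℝ) - j) * km) := by
  have hi : 0 < i := by omega
  linarith [hξ.2.1 hi, coord_add_le hξ (j := j) (k := i - 1) (by omega) (by omega)]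

theorem finite (α β km : ℝ) (i : ℕ) : (DkSet α β km i).Finite := by
  refine (Set.Finite.pi fun j : Fin i => Set.finite_setOf_exists_eq_add_two_mul_natCast_lt
    (α - |β| + 1 + 2 * (j : ℕ) * km) (-(2 * (((i - 1 : ℕ) : ℝ) - (j : ℕ)) * km))).subset ?_
  intro ξ hξ j _
  obtain ⟨m, hm⟩ := exists_coord_eq hξ j j.isLt
  exact ⟨m, hm, coord_lt hξ j j.isLt⟩

lemma lt_zero_of_nonempty (hi : 0 < i) (h : (DkSet α β km i).Nonempty) :
    α - |β| + 2 * ((i : ℝ) - 1) * km + 1 < 0 := by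
  obtain ⟨ξ, hξ⟩ := h
  obtain ⟨m, hm⟩ := exists_coord_eq hξ (i - 1) (by omega)
  rw [Nat.cast_pred hi] at hm
  linarith [hξ.2.1 hi, (Nat.cast_nonneg m : (0 : ℝ) ≤ m)]

lemma arithProg_mem (h : α - |β| + 2 * ((i : ℝ) - 1) * km + 1 < 0) :
    (fun j : Fin i => α - |β| + 1 + 2 * (j : ℕ) * km) ∈ DkSet α β km i := by
  refine ⟨fun _ => ⟨0, by push_cast; ring⟩, fun hi => ?_, fun j _ => ⟨0, by push_cast; ring⟩⟩
  simp only [Nat.cast_pred hi]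
  linarith

theorem nonempty_iff (hi : 0 < i) :
    (DkSet α β km i).Nonempty ↔ α - |β| + 2 * ((i : ℝ) - 1) * km + 1 < 0 :=
  ⟨lt_zero_of_nonempty hi, fun h => ⟨_, arithProg_mem h⟩⟩

end DkSet

theorem stmt8_general (km α β : ℝ) (i : ℕ) (hi : 1 ≤ i) :
    (DkSet α β km i).Finite ∧
    ((DkSet α β km i).Nonempty ↔ α - |β| + 2 * ((i : ℝ) - 1) * km + 1 < 0) :=
  ⟨DkSet.finite α β km i, DkSet.nonempty_iff hi⟩

theorem stmt8 (ks km kl α β : ℝ) (hα : α = ks + kl - 1 / 2) (hβ : β = kl - 1 / 2)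
    (hkm : 0 ≤ km) (r i : ℕ) (hi : 1 ≤ i) (hir : i ≤ r) :
    (DkSet α β km i).Finite ∧
    ((DkSet α β km i).Nonempty ↔ α - |β| + 2 * ((i : ℝ) - 1) * km + 1 < 0) :=
  stmt8_general km α β i hi
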